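/- arXiv:1812.09035 — 3 statements merged into one kernel-verified Lean document; each statement's English description precedes it below -/
import Mathlib

section
/- Let H ≤ K' ≤ K ≤ G with H normal (in fact central) in K', the index [K : K'] finite, and K ≤ Comm_G(H). Then there exists a finite index subgroup H' ≤ H which is normal in K. Namely, if s₁,...,sₙ are representatives of the left cosets of K' in K, then H' = ⋂ᵢ sᵢHsᵢ⁻¹ has finite index in H and is normal in K. -/
/-!
Conjugation by `g` sends `H` to a subgroup `gHg⁻¹` that depends only on the coset `g N(H)`
of the normalizer. Since `N(H)` contains `K'`, it has finite index in `K`, so as `k` ranges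
over `K` there are only finitely many conjugates `kHk⁻¹`, each commensurable with `H`.
Their intersection is therefore of finite index in `H`, and it is permuted, hence fixed,
by conjugation with elements of `K`.
-/

open Pointwise ConjAct

namespace Subgroup

variable {G : Type*} [Group G]

theorem map_conj_eq_toConjAct_smul (g : G) (H : Subgroup G) :
    H.map (MulAut.conj g).toMonoidHom = toConjAct g • H :=
  rfl

theorem pointwise_smul_iInf {α : Type*} [Group α] [MulDistribMulAction α G] (a : α)
    {ι : Type*} (S : ι → Subgroup G) : a • ⨅ i, S i = ⨅ i, a • S i := by
  ext x
  simp only [mem_pointwise_smul_iff_inv_smul_mem, mem_iInf]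

theorem relIndex_iInf_ne_zero_of_finite_range {ι : Type*} {f : ι → Subgroup G}
    {L : Subgroup G} (hfin : (Set.range f).Finite) (hf : ∀ i, (f i).relIndex L ≠ 0) :
    (⨅ i, f i).relIndex L ≠ 0 := by
  have := hfin.to_subtype
  rw [← sInf_range, sInf_eq_iInf']
  exact relIndex_iInf_ne_zero fun ⟨_, i, hi⟩ => hi ▸ hf i

theorem finite_range_of_mul_right_invariant {α : Type*} {L K : Subgroup G}
    (hL : L.relIndex K ≠ 0) {f : G → α} (hf : ∀ g, ∀ l ∈ L, f (g * l) = f g) :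
    (Set.range fun k : K => f k).Finite := by
  have : Finite (K ⧸ L.subgroupOf K) := Nat.finite_of_card_ne_zero hL
  refine (Set.finite_range fun q : K ⧸ L.subgroupOf K => f (q.out : G)).subset ?_
  rintro _ ⟨k, rfl⟩
  obtain ⟨l, hl⟩ := QuotientGroup.mk_out_eq_mul (L.subgroupOf K) k
  exact ⟨k, by simp only [hl, coe_mul, hf _ _ (mem_subgroupOf.1 l.2)]⟩

/-- The paper's `⋂ᵢ sᵢHsᵢ⁻¹`: once `K'` normalizes `H`, intersecting over all of `K` gives
the same subgroup as intersecting over coset representatives `sᵢ` of `K'`. -/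
def relNormalCore (H K : Subgroup G) : Subgroup G :=
  ⨅ k : K, toConjAct (k : G) • H

theorem relNormalCore_le (H K : Subgroup G) : H.relNormalCore K ≤ H :=
  iInf_le_of_le 1 (by simp)

theorem toConjAct_smul_relNormalCore {H K : Subgroup G} {k : G} (hk : k ∈ K) :
    toConjAct k • H.relNormalCore K = H.relNormalCore K := by
  simp_rw [relNormalCore, pointwise_smul_iInf, smul_smul, ← toConjAct_mul]
  exact (Equiv.mulLeft (⟨k, hk⟩ : K)).iInf_comp (g := fun k' : K => toConjAct (k' : G) • H)

theorem relIndex_relNormalCore_ne_zero {H K : Subgroup G}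
    (hK : K ≤ Commensurable.commensurator H) (hN : (normalizer (H : Set G)).relIndex K ≠ 0) :
    (H.relNormalCore K).relIndex H ≠ 0 := by
  refine relIndex_iInf_ne_zero_of_finite_range ?_ fun k => (hK k.2).1
  refine finite_range_of_mul_right_invariant (f := fun g => toConjAct g • H) hN fun g l hl => ?_
  rw [toConjAct_mul, mul_smul, conjAct_pointwise_smul_eq_self hl]

end Subgroup

open Subgroup

theorem stmt_5_general {G : Type*} [Group G] (H K' K : Subgroup G)
    (h3 : K ≤ Subgroup.Commensurable.commensurator H)
    (hcentral : ∀ k ∈ K', ∀ h ∈ H, Commute k h)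
    (hfi : K'.relIndex K ≠ 0) :
    ∃ H' : Subgroup G, H' ≤ H ∧ H'.relIndex H ≠ 0 ∧
      ∀ k ∈ K, Subgroup.map (MulAut.conj k).toMonoidHom H' = H' := by
  have hK'N : K' ≤ normalizer (H : Set G) := fun k hk =>
    centralizer_le_normalizer _ (mem_centralizer_iff.2 fun h hh => (hcentral k hk h hh).eq.symm)
  have hN : (normalizer (H : Set G)).relIndex K ≠ 0 :=
    ne_zero_of_dvd_ne_zero hfi (relIndex_dvd_of_le_left K hK'N)
  refine ⟨H.relNormalCore K, relNormalCore_le H K, relIndex_relNormalCore_ne_zero h3 hN,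
    fun k hk => ?_⟩
  rw [map_conj_eq_toConjAct_smul]
  exact toConjAct_smul_relNormalCore hk

/-- Let `H ≤ K' ≤ K ≤ Comm_G(H)` with `H` central in `K'` and `[K : K']` finite.
Then `H' = ⋂ᵢ sᵢ H sᵢ⁻¹`, where the `sᵢ` run over a set of representatives of the
left cosets of `K'` in `K`, is a finite index subgroup of `H` which is normal in `K`.
We state the existence of such a finite index subgroup of `H` normal in `K`. -/
theorem stmt_5 {G : Type*} [Group G] (H K' K : Subgroup G)
    (h1 : H ≤ K') (h2 : K' ≤ K) (h3 : K ≤ Subgroup.Commensurable.commensurator H)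
    (hcentral : ∀ k ∈ K', ∀ h ∈ H, Commute k h)
    (hfi : K'.relIndex K ≠ 0) :
    ∃ H' : Subgroup G, H' ≤ H ∧ H'.relIndex H ≠ 0 ∧
      ∀ k ∈ K, Subgroup.map (MulAut.conj k).toMonoidHom H' = H' :=
  stmt_5_general H K' K h3 hcentral hfi
end

section
/- Suppose a group G has the unique root property, and let g, h ∈ G. If gᵐ and hⁿ commute for some nonzero integers m and n, then g and h commute. -/
/-- A group has the unique root property if `x^n = y^n` implies `x = y`
for every positive integer `n`. -/
def UniqueRootProperty (G : Type*) [Group G] : Prop :=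
  ∀ (n : ℕ), 0 < n → ∀ x y : G, x ^ n = y ^ n → x = y

/-! Conjugating `g` by `h` conjugates `g ^ m` by `h`; if `h` fixes `g ^ m`, then `h g h⁻¹` and `g`
are two `m`-th roots of `g ^ m`, hence equal. Applying this once to each side gives the claim. -/

namespace UniqueRootProperty

variable {G : Type*} [Group G]

theorem zpow_injective (hG : UniqueRootProperty G) {m : ℤ} (hm : m ≠ 0) {x y : G}
    (hxy : x ^ m = y ^ m) : x = y := by
  have hk : 0 < m.natAbs := Int.natAbs_pos.mpr hm
  refine hG m.natAbs hk x y ?_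
  rcases Int.natAbs_eq m with hm' | hm'
  · rwa [hm', zpow_natCast, zpow_natCast] at hxy
  · rwa [hm', zpow_neg, zpow_neg, inv_inj, zpow_natCast, zpow_natCast] at hxy

theorem commute_of_commute_zpow_left (hG : UniqueRootProperty G) {m : ℤ} (hm : m ≠ 0)
    {g h : G} (hc : Commute (g ^ m) h) : Commute g h := by
  have hconj : (h * g * h⁻¹) ^ m = g ^ m := by
    rw [conj_zpow, mul_inv_eq_iff_eq_mul]
    exact hc.eq.symm
  exact (mul_inv_eq_iff_eq_mul.mp (hG.zpow_injective hm hconj)).symm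

end UniqueRootProperty

/-- In a group with the unique root property, if `g^m` and `h^n` commute for some
nonzero integers `m`, `n`, then `g` and `h` commute. -/
theorem stmt_6 {G : Type*} [Group G] (hG : UniqueRootProperty G)
    (g h : G) (m n : ℤ) (hm : m ≠ 0) (hn : n ≠ 0)
    (hcomm : Commute (g ^ m) (h ^ n)) : Commute g h :=
  have hgh : Commute g (h ^ n) := hG.commute_of_commute_zpow_left hm hcomm
  (hG.commute_of_commute_zpow_left hn hgh.symm).symm
end

section
/- In the Baumslag–Solitar group BS(1,n) = ⟨a, t | tat⁻¹ = aⁿ⟩ with n > 1, the cyclic subgroup H = ⟨a⟩ does not satisfy Condition (C): the cyclic subgroup generated by t lies in Comm_G(H) but does not normalize any finite index subgroup of H. -/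
/-- The Baumslag–Solitar group `BS(1,n) = ⟨a, t ∣ t a t⁻¹ = aⁿ⟩`, presented on two
generators `a = of false` and `t = of true`. -/
def BS (n : ℕ) : Type :=
  PresentedGroup
    ({FreeGroup.of true * FreeGroup.of false * (FreeGroup.of true)⁻¹ *
        (FreeGroup.of false ^ n)⁻¹} : Set (FreeGroup Bool))

instance (n : ℕ) : Group (BS n) := by unfold BS; infer_instance

/-- The generator `a` of `BS(1,n)`. -/
def BS.a (n : ℕ) : BS n := PresentedGroup.of false

/-- The generator `t` of `BS(1,n)`. -/
def BS.t (n : ℕ) : BS n := PresentedGroup.of true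

/-!
Conjugation by `t` maps `⟨a⟩` onto `⟨aⁿ⟩`. Since `a` has infinite order (it acts on `ℚ` as
`x ↦ x + 1` while `t` acts as `x ↦ n x`), `⟨aⁿ⟩` has index `n` in `⟨a⟩`, so `t` commensurates
`⟨a⟩`. If `t` normalized a finite-index subgroup `H'` of `⟨a⟩`, then `H' ≤ t⟨a⟩t⁻¹ = ⟨aⁿ⟩` and
`[⟨a⟩ : H'] = [t⟨a⟩t⁻¹ : tH't⁻¹] · n = [⟨a⟩ : H'] · n`, forcing `n = 1`.
-/

open Subgroup

theorem Subgroup.relIndex_zpowers_pow {G : Type*} [Group G] {g : G} (hg : ¬IsOfFinOrder g)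
    (n : ℕ) : (zpowers (g ^ n)).relIndex (zpowers g) = n := by
  have hinj : Function.Injective (zpowersHom G g) := injective_zpow_iff_not_isOfFinOrder.mpr hg
  have hpow : zpowers (g ^ n) = (zpowers (Multiplicative.ofAdd (n : ℤ))).map (zpowersHom G g) := by
    simp [MonoidHom.map_zpowers]
  have htop : zpowers g = (⊤ : Subgroup (Multiplicative ℤ)).map (zpowersHom G g) :=
    (range_zpowersHom g).symm.trans (MonoidHom.range_eq_map _)
  rw [hpow, htop, relIndex_map_map_of_injective _ _ hinj, relIndex_top_right]
  -- a subgroup of `Multiplicative ℤ` is definitionally an additive subgroup of `ℤ`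
  exact Int.index_zmultiples n

theorem Subgroup.map_conj_ne_of_map_conj_lt {G : Type*} [Group G] {g : G} {H K : Subgroup G}
    (hK : K.map (MulAut.conj g).toMonoidHom < K) (hHK : H ≤ K) (hH : H.relIndex K ≠ 0) :
    H.map (MulAut.conj g).toMonoidHom ≠ H := by
  set c := (MulAut.conj g).toMonoidHom
  intro hnorm
  have hle : H ≤ K.map c := hnorm ▸ map_mono hHK
  have hsame : H.relIndex (K.map c) = H.relIndex K :=
    calc H.relIndex (K.map c) = (H.map c).relIndex (K.map c) := by rw [hnorm]
      _ = H.relIndex K := relIndex_map_map_of_injective _ _ (MulAut.conj g).injective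
  have htower := relIndex_mul_relIndex H (K.map c) K hle hK.le
  rw [hsame] at htower
  have hone : (K.map c).relIndex K = 1 :=
    Nat.eq_of_mul_eq_mul_left (Nat.pos_of_ne_zero hH) (htower.trans (mul_one _).symm)
  exact hK.not_ge (relIndex_eq_one.mp hone)

namespace BS

variable {n : ℕ}

theorem t_mul_a_mul_t_inv : t n * a n * (t n)⁻¹ = a n ^ n := by
  have h := PresentedGroup.mk_eq_mk_of_mul_inv_mem
    (x := FreeGroup.of true * FreeGroup.of false * (FreeGroup.of true)⁻¹)
    (y := FreeGroup.of false ^ n) (Set.mem_singleton _)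
  simp only [map_mul, map_inv, map_pow] at h
  exact h

noncomputable def affineRep (hn : n ≠ 0) : BS n →* Equiv.Perm ℚ :=
  PresentedGroup.toGroup (f := fun b => cond b (Equiv.mulLeft₀ (n : ℚ) (Nat.cast_ne_zero.mpr hn))
    (Equiv.addLeft 1)) <| by
    rintro r rfl
    simp only [map_mul, map_inv, map_pow, FreeGroup.lift_apply_of, cond_true, cond_false,
      mul_inv_eq_one]
    ext x
    simp [Equiv.Perm.inv_def, mul_add, hn, add_comm]

theorem affineRep_a (hn : n ≠ 0) : affineRep hn (a n) = Equiv.addLeft 1 :=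
  PresentedGroup.toGroup.of _

theorem not_isOfFinOrder_a (hn : n ≠ 0) : ¬IsOfFinOrder (a n) := by
  intro h
  obtain ⟨m, hm, hpow⟩ := isOfFinOrder_iff_pow_eq_one.mp ((affineRep hn).isOfFinOrder h)
  rw [affineRep_a] at hpow
  exact hm.ne' (by simpa using congrArg (· 0) hpow)

theorem map_conj_t_zpowers_a :
    (zpowers (a n)).map (MulAut.conj (t n)).toMonoidHom = zpowers (a n ^ n) := by
  rw [MonoidHom.map_zpowers]
  exact congrArg zpowers t_mul_a_mul_t_inv

end BS

/-- In `BS(1,n)` with `n > 1`, the cyclic subgroup `H = ⟨a⟩` does not satisfy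
Condition (C): the cyclic subgroup `⟨t⟩` lies in `Comm_G(H)`, but it does not
normalize any finite index subgroup of `H`. -/
theorem stmt_8 (n : ℕ) (hn : 1 < n) :
    Subgroup.closure {BS.t n} ≤ Subgroup.Commensurable.commensurator (Subgroup.closure {BS.a n}) ∧
    ∀ H' : Subgroup (BS n), H' ≤ Subgroup.closure {BS.a n} →
      H'.relIndex (Subgroup.closure {BS.a n}) ≠ 0 →
      ¬ (∀ k ∈ Subgroup.closure {BS.t n},
          Subgroup.map (MulAut.conj k).toMonoidHom H' = H') := by
  have hindex : (zpowers (BS.a n ^ n)).relIndex (zpowers (BS.a n)) = n :=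
    relIndex_zpowers_pow (BS.not_isOfFinOrder_a (by omega)) n
  have hle : zpowers (BS.a n ^ n) ≤ zpowers (BS.a n) :=
    zpowers_le.mpr (pow_mem (mem_zpowers _) n)
  rw [← zpowers_eq_closure, ← zpowers_eq_closure]
  refine ⟨?_, fun H' hH' hfin hnorm => ?_⟩
  · rw [zpowers_le, Commensurable.commensurator_mem_iff]
    change Commensurable ((zpowers (BS.a n)).map (MulAut.conj (BS.t n)).toMonoidHom) _
    rw [BS.map_conj_t_zpowers_a]
    exact ⟨by omega, by simp [relIndex_eq_one.mpr hle]⟩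
  · refine map_conj_ne_of_map_conj_lt ?_ hH' hfin (hnorm (BS.t n) (mem_zpowers _))
    rw [BS.map_conj_t_zpowers_a]
    exact hle.lt_of_ne fun h => by rw [h, relIndex_self] at hindex; omega
end
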